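/- Let μ be a finite Borel measure on ℝ^d and (μ_n) a sequence of Borel measures, each absolutely continuous with respect to Lebesgue measure ℒ^d with densities ρ_n satisfying sup_n ‖ρ_n‖_{L²(B)} < ∞ for every ball B ⊂ ℝ^d. If ∫ φ dμ ≤ liminf_n ∫ φ dμ_n for every nonnegative compactly supported continuous φ, then μ is absolutely continuous with respect to ℒ^d, and its density ρ satisfies ‖ρ‖_{L²(B)} ≤ liminf_n ‖ρ_n‖_{L²(B)} for every ball B. -/

import Mathlib

/-!
Testing against nonnegative compactly supported continuous functions gives `μ U ≤ liminf μₙ U`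
for open `U` (Urysohn and inner regularity). Densities bounded in `L²` of a ball are uniformly
absolutely continuous there (`ρ ≤ t + ρ² / t`), so by outer regularity of Lebesgue measure the
inequality passes to all measurable subsets of the ball, and by approximation to all measurable
functions supported in it. Null sets thus stay null, so `μ = ρ ℒᵈ`. Pairing with a truncation
`g = min ρ m` on the ball and using `2 g ρₙ ≤ g² + ρₙ²` gives `∫ g² ≤ liminf ∫ ρₙ²`, and
monotone convergence in `m` finishes.
-/

open MeasureTheory Filter Set Topology
open scoped ENNReal NNReal

variable {ι : Type*} {l : Filter ι}

namespace ENNReal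

lemma mul_liminf_le_liminf_mul (c : ℝ≥0∞) (u : ι → ℝ≥0∞) :
    c * l.liminf u ≤ l.liminf fun i => c * u i := by
  simp only [liminf_eq_iSup_iInf, ENNReal.mul_iSup]
  exact iSup₂_mono fun s _ => le_iInf₂ fun i hi => mul_le_mul_right (iInf₂_le i hi) c

lemma le_liminf_add (u v : ι → ℝ≥0∞) : l.liminf u + l.liminf v ≤ l.liminf (u + v) := by
  simp only [liminf_eq_iSup_iInf]
  refine biSup_add_biSup_le' ⟨univ, univ_mem⟩ ⟨univ, univ_mem⟩ fun s hs t ht => ?_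
  refine le_iSup₂_of_le (s ∩ t) (inter_mem hs ht) (le_iInf₂ fun i hi => ?_)
  exact add_le_add (iInf₂_le i hi.1) (iInf₂_le i hi.2)

lemma two_mul_le_add_sq (a b : ℝ≥0∞) : 2 * a * b ≤ a ^ 2 + b ^ 2 := by
  rcases eq_or_ne a ⊤ with rfl | ha
  · simp
  rcases eq_or_ne b ⊤ with rfl | hb
  · simp
  lift a to ℝ≥0 using ha
  lift b to ℝ≥0 using hb
  exact_mod_cast _root_.two_mul_le_add_sq a b

end ENNReal

variable {X : Type*} [MeasurableSpace X]

def LeVagueLiminf [TopologicalSpace X] (l : Filter ι) (μ : Measure X) (μs : ι → Measure X) :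
    Prop :=
  ∀ φ : X → ℝ, Continuous φ → HasCompactSupport φ → (∀ x, 0 ≤ φ x) →
    ∫⁻ x, ENNReal.ofReal (φ x) ∂μ ≤ l.liminf fun i => ∫⁻ x, ENNReal.ofReal (φ x) ∂μs i

lemma LeVagueLiminf.measure_le_liminf_of_isOpen [TopologicalSpace X] [T2Space X]
    [LocallyCompactSpace X] [OpensMeasurableSpace X] {μ : Measure X} [μ.Regular]
    {μs : ι → Measure X} (h : LeVagueLiminf l μ μs) {U : Set X} (hU : IsOpen U) :
    μ U ≤ l.liminf fun i => μs i U := by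
  rw [hU.measure_eq_iSup_isCompact]
  refine iSup_le fun K => iSup₂_le fun hKU hK => ?_
  obtain ⟨φ, hφK, hφU, hφc, hφ01⟩ := exists_continuous_one_zero_of_isCompact hK
    hU.isClosed_compl (disjoint_compl_right_iff_subset.2 hKU)
  have hKφ : K.indicator 1 ≤ fun x => ENNReal.ofReal (φ x) := fun x => by
    by_cases hx : x ∈ K
    · simp [hx, hφK hx]
    · simp [hx]
  have hφU' : (fun x => ENNReal.ofReal (φ x)) ≤ U.indicator 1 := fun x => by
    by_cases hx : x ∈ U
    · simpa [hx] using (hφ01 x).2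
    · simp [hx, hφU hx]
  calc μ K ≤ ∫⁻ x, ENNReal.ofReal (φ x) ∂μ := by
        simpa [hK.measurableSet] using lintegral_mono (μ := μ) hKφ
    _ ≤ l.liminf fun i => ∫⁻ x, ENNReal.ofReal (φ x) ∂μs i :=
        h φ φ.continuous hφc fun x => (hφ01 x).1
    _ ≤ l.liminf fun i => μs i U := liminf_le_liminf (.of_forall fun i => by
        simpa [hU.measurableSet] using lintegral_mono (μ := μs i) hφU')

lemma setLIntegral_le_mul_measure_add_setLIntegral_sq_div (ν : Measure X) (ρ : X → ℝ≥0∞)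
    (S : Set X) {t : ℝ≥0∞} (ht0 : t ≠ 0) (htop : t ≠ ⊤) :
    ∫⁻ x in S, ρ x ∂ν ≤ t * ν S + (∫⁻ x in S, ρ x ^ 2 ∂ν) / t := by
  have hpt : ∀ x, ρ x ≤ t + ρ x ^ 2 / t := fun x => by
    rcases le_total (ρ x) t with h | h
    · exact le_add_right h
    · refine le_add_left ((ENNReal.le_div_iff_mul_le (.inl ht0) (.inl htop)).2 ?_)
      rw [sq]
      exact mul_le_mul_right h _
  calc ∫⁻ x in S, ρ x ∂ν ≤ ∫⁻ x in S, (t + ρ x ^ 2 / t) ∂ν := lintegral_mono hpt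
    _ = t * ν S + (∫⁻ x in S, ρ x ^ 2 ∂ν) / t := by
      simp only [div_eq_mul_inv]
      rw [lintegral_add_left measurable_const,
        lintegral_mul_const' _ _ (ENNReal.inv_ne_top.2 ht0), setLIntegral_const]

lemma exists_forall_setLIntegral_le_of_sq_le (ν : Measure X) {ρs : ι → X → ℝ≥0∞} {W : Set X}
    {C : ℝ≥0∞} (hC : C ≠ ⊤) (hbound : ∀ i, ∫⁻ x in W, ρs i x ^ 2 ∂ν ≤ C) {ε : ℝ≥0∞}
    (hε : ε ≠ 0) : ∃ δ ≠ 0, ∀ S ⊆ W, ν S ≤ δ → ∀ i, ∫⁻ x in S, ρs i x ∂ν ≤ ε := by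
  have hε2 : ε / 2 ≠ 0 := by simpa using hε
  have hC_div : Tendsto (fun n : ℕ => C / n) atTop (𝓝 0) := by
    simpa [div_eq_mul_inv] using
      ENNReal.Tendsto.const_mul ENNReal.tendsto_inv_nat_nhds_zero (.inr hC)
  obtain ⟨n, hn, hn0⟩ := ((hC_div.eventually (gt_mem_nhds (pos_iff_ne_zero.2 hε2))).and
    (eventually_ne_atTop 0)).exists
  have hn0' : (n : ℝ≥0∞) ≠ 0 := by exact_mod_cast hn0
  refine ⟨ε / 2 / n, by simp [hε, ENNReal.div_eq_zero_iff], fun S hSW hS i => ?_⟩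
  calc ∫⁻ x in S, ρs i x ∂ν ≤ n * ν S + (∫⁻ x in S, ρs i x ^ 2 ∂ν) / n :=
        setLIntegral_le_mul_measure_add_setLIntegral_sq_div ν _ S hn0' (ENNReal.natCast_ne_top n)
    _ ≤ n * (ε / 2 / n) + C / n := by
        gcongr
        exact (lintegral_mono_set hSW).trans (hbound i)
    _ ≤ ε / 2 + ε / 2 := by
        rw [ENNReal.mul_div_cancel hn0' (ENNReal.natCast_ne_top n)]
        exact add_le_add le_rfl hn.le
    _ = ε := ENNReal.add_halves ε

lemma measure_le_liminf_withDensity_of_sq_le [TopologicalSpace X] [OpensMeasurableSpace X]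
    [l.NeBot] {ν : Measure X} [ν.OuterRegular] {μ : Measure X} {ρs : ι → X → ℝ≥0∞}
    (hopen : ∀ U, IsOpen U → μ U ≤ l.liminf fun i => ν.withDensity (ρs i) U)
    {W : Set X} (hW : IsOpen W) {C : ℝ≥0∞} (hC : C ≠ ⊤)
    (hbound : ∀ i, ∫⁻ x in W, ρs i x ^ 2 ∂ν ≤ C)
    {A : Set X} (hA : MeasurableSet A) (hAW : A ⊆ W) (hνA : ν A ≠ ⊤) :
    μ A ≤ l.liminf fun i => ν.withDensity (ρs i) A := by
  refine ENNReal.le_of_forall_pos_le_add fun ε hε _ => ?_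
  obtain ⟨δ, hδ, hδε⟩ :=
    exists_forall_setLIntegral_le_of_sq_le ν hC hbound (ENNReal.coe_ne_zero.2 hε.ne')
  obtain ⟨U, hAU, hU, hνU⟩ := Set.exists_isOpen_lt_add A hνA hδ
  have hAV : A ⊆ U ∩ W := subset_inter hAU hAW
  have hV : ∀ i, ν.withDensity (ρs i) (U ∩ W) ≤ ν.withDensity (ρs i) A + ε := fun i => by
    rw [← measure_sdiff_add_inter _ hA, inter_eq_right.2 hAV, add_comm]
    gcongr
    rw [withDensity_apply _ ((hU.inter hW).measurableSet.diff hA)]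
    refine hδε _ (sdiff_subset.trans inter_subset_right) ?_ i
    rw [measure_sdiff_le_iff_le_add hA.nullMeasurableSet hAV hνA]
    exact (measure_mono inter_subset_left).trans hνU.le
  calc μ A ≤ μ (U ∩ W) := measure_mono hAV
    _ ≤ l.liminf fun i => ν.withDensity (ρs i) (U ∩ W) := hopen _ (hU.inter hW)
    _ ≤ l.liminf fun i => ν.withDensity (ρs i) A + ε := liminf_le_liminf (.of_forall hV)
    _ = (l.liminf fun i => ν.withDensity (ρs i) A) + ε :=
        liminf_add_const _ _ _ (by isBoundedDefault) (by isBoundedDefault)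

lemma Measure.absolutelyContinuous_of_le_liminf [l.NeBot] {μ ν : Measure X}
    {μs : ι → Measure X} (h : ∀ A, MeasurableSet A → μ A ≤ l.liminf fun i => μs i A)
    (hμs : ∀ i, μs i ≪ ν) : μ ≪ ν :=
  .mk fun A hA hνA => le_antisymm ((h A hA).trans (by simp [hμs _ hνA])) bot_le

lemma Measure.absolutelyContinuous_of_forall_restrict_ball [PseudoMetricSpace X]
    {μ ν : Measure X} (c : X) (h : ∀ r, 0 < r → μ.restrict (Metric.ball c r) ≪ ν) : μ ≪ ν := by
  refine .mk fun S hS hνS => ?_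
  rw [← inter_univ S, ← Metric.iUnion_ball_nat_succ c, inter_iUnion]
  refine measure_iUnion_null fun k => ?_
  rw [← Measure.restrict_apply hS]
  exact h _ k.cast_add_one_pos hνS

lemma lintegral_le_liminf_of_measure_le_liminf {μ : Measure X} {μs : ι → Measure X}
    (h : ∀ A, MeasurableSet A → μ A ≤ l.liminf fun i => μs i A)
    {f : X → ℝ≥0∞} (hf : Measurable f) :
    ∫⁻ x, f x ∂μ ≤ l.liminf fun i => ∫⁻ x, f x ∂μs i := by
  refine Measurable.ennreal_induction
    (motive := fun f => ∫⁻ x, f x ∂μ ≤ l.liminf fun i => ∫⁻ x, f x ∂μs i) ?_ ?_ ?_ hf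
  · intro c A hA
    simp only [lintegral_indicator_const hA]
    exact (mul_le_mul_right (h _ hA) c).trans (ENNReal.mul_liminf_le_liminf_mul c _)
  · intro f g _ hf _ ihf ihg
    simp only [Pi.add_apply, lintegral_add_left hf]
    exact (add_le_add ihf ihg).trans (ENNReal.le_liminf_add _ _)
  · intro f hf hmono ih
    rw [lintegral_iSup hf hmono]
    refine iSup_le fun k => (ih k).trans (liminf_le_liminf (.of_forall fun i => ?_))
    exact lintegral_mono fun x => le_iSup (fun k => f k x) k

section Density

variable [l.NeBot] {ν : Measure X} {ρ : X → ℝ≥0∞} {ρs : ι → X → ℝ≥0∞}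

lemma lintegral_sq_le_liminf_of_le_density (hρ : Measurable ρ) (hρs : ∀ i, Measurable (ρs i))
    (h : ∀ f, Measurable f →
      ∫⁻ x, f x ∂ν.withDensity ρ ≤ l.liminf fun i => ∫⁻ x, f x ∂ν.withDensity (ρs i))
    {g : X → ℝ≥0∞} (hg : Measurable g) (hgρ : g ≤ ρ) (hg_fin : ∫⁻ x, g x ^ 2 ∂ν ≠ ⊤) :
    ∫⁻ x, g x ^ 2 ∂ν ≤ l.liminf fun i => ∫⁻ x, ρs i x ^ 2 ∂ν := by
  set G := ∫⁻ x, g x ^ 2 ∂ν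
  have hG : G ≤ ∫⁻ x, g x ∂ν.withDensity ρ := by
    rw [lintegral_withDensity_eq_lintegral_mul _ hρ hg]
    exact lintegral_mono fun x => by simpa [sq, mul_comm] using mul_le_mul_right (hgρ x) (g x)
  have hpair : ∀ i, 2 * ∫⁻ x, g x ∂ν.withDensity (ρs i) ≤ ∫⁻ x, ρs i x ^ 2 ∂ν + G := fun i => by
    rw [lintegral_withDensity_eq_lintegral_mul _ (hρs i) hg,
      ← lintegral_const_mul' _ _ (by simp), ← lintegral_add_left ((hρs i).pow_const 2)]
    exact lintegral_mono fun x => by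
      simpa [mul_assoc] using ENNReal.two_mul_le_add_sq (ρs i x) (g x)
  refine (ENNReal.add_le_add_iff_right hg_fin).1 ?_
  calc G + G = 2 * G := (two_mul G).symm
    _ ≤ 2 * l.liminf fun i => ∫⁻ x, g x ∂ν.withDensity (ρs i) :=
        mul_le_mul_right (hG.trans (h g hg)) 2
    _ ≤ l.liminf fun i => 2 * ∫⁻ x, g x ∂ν.withDensity (ρs i) :=
        ENNReal.mul_liminf_le_liminf_mul _ _
    _ ≤ l.liminf fun i => ∫⁻ x, ρs i x ^ 2 ∂ν + G := liminf_le_liminf (.of_forall hpair)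
    _ = (l.liminf fun i => ∫⁻ x, ρs i x ^ 2 ∂ν) + G :=
        liminf_add_const _ _ _ (by isBoundedDefault) (by isBoundedDefault)

lemma lintegral_sq_density_le_liminf [IsFiniteMeasure ν] (hρ : Measurable ρ)
    (hρs : ∀ i, Measurable (ρs i))
    (h : ∀ f, Measurable f →
      ∫⁻ x, f x ∂ν.withDensity ρ ≤ l.liminf fun i => ∫⁻ x, f x ∂ν.withDensity (ρs i)) :
    ∫⁻ x, ρ x ^ 2 ∂ν ≤ l.liminf fun i => ∫⁻ x, ρs i x ^ 2 ∂ν := by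
  set g : ℕ → X → ℝ≥0∞ := fun m x => min (ρ x) m
  have hg : ∀ m, Measurable (g m) := fun m => hρ.min measurable_const
  have hg_fin : ∀ m, ∫⁻ x, g m x ^ 2 ∂ν ≠ ⊤ := fun m => by
    refine ne_top_of_le_ne_top
      (lintegral_const_lt_top (μ := ν) (c := (m : ℝ≥0∞) ^ 2) (by simp)).ne
      (lintegral_mono fun x => ?_)
    gcongr
    exact min_le_right _ _
  have hg_mono : ∀ x, Monotone fun m => g m x ^ 2 := fun x m n hmn => by
    dsimp only [g]
    gcongr
  have hg_tendsto : ∀ x, Tendsto (fun m => g m x ^ 2) atTop (𝓝 (ρ x ^ 2)) := fun x => by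
    refine (ENNReal.continuous_pow 2).continuousAt.tendsto.comp ?_
    simpa using tendsto_const_nhds.min ENNReal.tendsto_nat_nhds_top
  refine le_of_tendsto' (lintegral_tendsto_of_tendsto_of_monotone
    (fun m => ((hg m).pow_const 2).aemeasurable) (.of_forall hg_mono) (.of_forall hg_tendsto))
    fun m => lintegral_sq_le_liminf_of_le_density hρ hρs h (hg m) (fun x => min_le_left _ _)
      (hg_fin m)

end Density

theorem stmt7 (d : ℕ) (μ : Measure (EuclideanSpace ℝ (Fin d))) [IsFiniteMeasure μ]
    (ρn : ℕ → EuclideanSpace ℝ (Fin d) → ENNReal) (hρn : ∀ n, Measurable (ρn n))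
    (μn : ℕ → Measure (EuclideanSpace ℝ (Fin d)))
    (hμn : ∀ n, μn n = volume.withDensity (ρn n))
    (hL2 : ∀ (c : EuclideanSpace ℝ (Fin d)) (r : ℝ), 0 < r →
      ∃ C : ENNReal, C < ⊤ ∧ ∀ n, ∫⁻ x in Metric.ball c r, ρn n x ^ 2 ≤ C)
    (hlim : ∀ φ : EuclideanSpace ℝ (Fin d) → ℝ, Continuous φ → HasCompactSupport φ →
      (∀ x, 0 ≤ φ x) →
      ∫⁻ x, ENNReal.ofReal (φ x) ∂μ ≤
        atTop.liminf fun n => ∫⁻ x, ENNReal.ofReal (φ x) ∂(μn n)) :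
    μ ≪ volume ∧
      ∀ (c : EuclideanSpace ℝ (Fin d)) (r : ℝ), 0 < r →
        ∫⁻ x in Metric.ball c r, μ.rnDeriv volume x ^ 2 ≤
          atTop.liminf fun n => ∫⁻ x in Metric.ball c r, ρn n x ^ 2 := by
  obtain rfl : μn = fun n => volume.withDensity (ρn n) := funext hμn
  have hball : ∀ c r, 0 < r → ∀ A, MeasurableSet A → μ.restrict (Metric.ball c r) A ≤
      atTop.liminf fun n => (volume.restrict (Metric.ball c r)).withDensity (ρn n) A := by
    intro c r hr A hA
    obtain ⟨C, hC, hbound⟩ := hL2 c r hr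
    simp only [← restrict_withDensity measurableSet_ball, Measure.restrict_apply hA]
    exact measure_le_liminf_withDensity_of_sq_le
      (fun U hU => LeVagueLiminf.measure_le_liminf_of_isOpen hlim hU)
      Metric.isOpen_ball hC.ne hbound (hA.inter measurableSet_ball) inter_subset_right
      ((measure_mono inter_subset_right).trans_lt measure_ball_lt_top).ne
  have hac : μ ≪ volume := Measure.absolutelyContinuous_of_forall_restrict_ball 0 fun r hr =>
    Measure.absolutelyContinuous_of_le_liminf (hball 0 r hr) fun n =>
      (withDensity_absolutelyContinuous _ _).trans Measure.absolutelyContinuous_restrict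
  refine ⟨hac, fun c r hr => ?_⟩
  have : Fact (volume (Metric.ball c r) < ⊤) := ⟨measure_ball_lt_top⟩
  refine lintegral_sq_density_le_liminf (Measure.measurable_rnDeriv _ _) hρn fun f hf => ?_
  rw [← restrict_withDensity measurableSet_ball, Measure.withDensity_rnDeriv_eq μ volume hac]
  exact lintegral_le_liminf_of_measure_le_liminf (hball c r hr) hf
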